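/- Let G be a finite A-group that is an internal semidirect product G = F ⋊ T, where F = F(G) is the Fitting subgroup of G and T is a complement. Then for every g ∈ G there exists k ∈ G such that k⁻¹gk = xy with x ∈ F, y ∈ T and xy = yx (where x or y may be the identity). -/

import Mathlib

/-!
Common definitions: the set `N(G)` of conjugacy class sizes, `A`-groups,
the largest `p`-power `|G||_p` dividing an element of `N(G)`, the Fitting subgroup,
and the natural conjugation action of `G ⧸ H` on an abelian normal subgroup `H`
(used to form the semidirect product `H ⋊ G/H`).
-/

/-- `N(G)`: the set of conjugacy class sizes (indices of centralizers) of `G`. -/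
def indexSet (G : Type*) [Group G] : Set ℕ :=
  {n | ∃ x : G, n = (Subgroup.centralizer {x}).index}

/-- A finite group is an `A`-group if all its Sylow subgroups are abelian. -/
def IsAGroup (G : Type*) [Group G] : Prop :=
  ∀ (p : ℕ), p.Prime → ∀ P : Sylow p G, ∀ a b : (P : Subgroup G), a * b = b * a

/-- `|G||_p`: the highest power of `p` dividing some element of `N(G)`. -/
noncomputable def maxPPart (G : Type*) [Group G] (p : ℕ) : ℕ :=
  sSup {m | (∃ k : ℕ, m = p ^ k) ∧ ∃ n ∈ indexSet G, m ∣ n}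

open scoped Classical in
/-- The natural action of `G ⧸ H` on an abelian normal subgroup `H`, induced by
conjugation (`h ↦ g * h * g⁻¹`); it is used to form the semidirect product `H ⋊ G/H`.
(Junk value — the trivial action — if `H` is not abelian; see `quotConj_eq` below.) -/
noncomputable def quotConj (G : Type*) [Group G] (H : Subgroup G) [H.Normal] :
    G ⧸ H →* MulAut ↥H :=
  if h : H ≤ (MulAut.conjNormal (H := H)).ker then
    QuotientGroup.lift H MulAut.conjNormal h
  else 1

/-- When `H` is abelian, `quotConj` is indeed the conjugation action `h ↦ g * h * g⁻¹`. -/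
theorem quotConj_eq (G : Type*) [Group G] (H : Subgroup G) [H.Normal]
    (hab : ∀ a b : ↥H, a * b = b * a) (g : G) :
    quotConj G H (g : G ⧸ H) = MulAut.conjNormal g := by
  have hker : H ≤ (MulAut.conjNormal (H := H)).ker := by
    intro x hx
    rw [MonoidHom.mem_ker]
    ext y
    have h2 : x * (y : G) = (y : G) * x := congrArg Subtype.val (hab ⟨x, hx⟩ y)
    simp only [MulAut.conjNormal_apply, MulAut.one_apply]
    rw [mul_inv_eq_iff_eq_mul]
    exact h2
  rw [quotConj, dif_pos hker]
  rfl

/-- The Fitting subgroup: the join of all normal nilpotent subgroups. -/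
def fitting (G : Type*) [Group G] : Subgroup G :=
  ⨆ H ∈ {H : Subgroup G | H.Normal ∧ Group.IsNilpotent ↥H}, H

instance fitting_normal (G : Type*) [Group G] : (fitting G).Normal := by
  constructor
  intro n hn g
  rw [fitting, iSup_subtype'] at hn ⊢
  refine Subgroup.iSup_induction _
    (C := fun x => g * x * g⁻¹ ∈
      ⨆ H : {H : Subgroup G | H.Normal ∧ Group.IsNilpotent ↥H}, (H : Subgroup G))
    hn (fun H x hx => ?_) ?_ (fun x y hx hy => ?_)
  · exact Subgroup.mem_iSup_of_mem H (H.2.1.conj_mem x hx g)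
  · simpa using Subgroup.one_mem _
  · have h2 := Subgroup.mul_mem _ hx hy
    have h3 : g * (x * y) * g⁻¹ = (g * x * g⁻¹) * (g * y * g⁻¹) := by group
    show g * (x * y) * g⁻¹ ∈ _
    rwa [h3]

/-!
The Fitting subgroup `F` of an `A`-group is abelian: it is generated by the normal `p`-subgroups,
and two of those commute, either because they lie in a common abelian Sylow subgroup or because
they intersect trivially. Write `g = a t` with `a ∈ F`, `t ∈ T`. On the abelian group `F` the map
`ψ f = ⁅t, f⁆` is an endomorphism, and `ker ψ ⊓ range ψ = ⊥`: an element `⁅t, f⁆` commuting with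
`t` is central in `⟨t, f⟩` and lies in its derived subgroup, so it is trivial by Taunt's lemma
`Z(H) ∩ H' = 1` for `A`-groups `H`. Hence `a = k ⁅t, f⁆` with `k ∈ F` commuting with `t`, and
conjugating `g` by `f⁻¹` gives `k t`.
-/

open scoped IsMulCommutative commutatorElement

theorem Subgroup.eq_top_of_exists_sylow_le {G : Type*} [Group G] [Finite G] (H : Subgroup G)
    (h : ∀ (p : ℕ) [Fact p.Prime], ∃ P : Sylow p G, (P : Subgroup G) ≤ H) : H = ⊤ := by
  refine index_eq_one.mp (Nat.eq_one_iff_not_exists_prime_dvd.mpr fun p hp hdvd => ?_)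
  have : Fact p.Prime := ⟨hp⟩
  obtain ⟨P, hPH⟩ := h p
  exact P.not_dvd_index (hdvd.trans (index_dvd_of_le hPH))

theorem Subgroup.sSup_le_centralizer_sSup {G : Type*} [Group G] {S : Set (Subgroup G)}
    (h : ∀ H ∈ S, ∀ K ∈ S, H ≤ centralizer K) : sSup S ≤ centralizer (sSup S : Subgroup G) :=
  sSup_le fun H hH => le_centralizer_iff.mp <| sSup_le fun K hK => h K hK H hH

theorem MonoidHom.exists_mem_ker_mul_eq {A : Type*} [Group A] [Finite A] (ψ : A →* A)
    (h : Disjoint ψ.ker ψ.range) (a : A) : ∃ k ∈ ψ.ker, ∃ b, a = k * ψ b := by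
  have hinj : Set.InjOn ψ ψ.range := fun x hx y hy hxy => by
    have hker : x * y⁻¹ ∈ ψ.ker := by rw [mem_ker, map_mul, map_inv, hxy, mul_inv_cancel]
    have hrange : x * y⁻¹ ∈ ψ.range := ψ.range.mul_mem hx (ψ.range.inv_mem hy)
    exact mul_inv_eq_one.mp (Subgroup.disjoint_def.mp h hker hrange)
  have hbij : Set.BijOn ψ ψ.range ψ.range :=
    (Set.toFinite _).injOn_iff_bijOn_of_mapsTo (fun x _ => ψ.mem_range.mpr ⟨x, rfl⟩) |>.mp hinj
  obtain ⟨_, ⟨b, rfl⟩, hb⟩ := hbij.surjOn ⟨a, rfl⟩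
  exact ⟨a * (ψ b)⁻¹, by rw [mem_ker, map_mul, map_inv, hb, mul_inv_cancel], b, by group⟩

section NormalPSubgroups

variable {G : Type*} [Group G] [Finite G]

def normalPSubgroups (G : Type*) [Group G] : Set (Subgroup G) :=
  {P | P.Normal ∧ ∃ p, p.Prime ∧ IsPGroup p P}

theorem le_sSup_normalPSubgroups {N : Subgroup G} [N.Normal] (hN : Group.IsNilpotent N) :
    N ≤ sSup (normalPSubgroups G) := by
  rw [← Subgroup.subgroupOf_eq_top]
  refine Subgroup.eq_top_of_exists_sylow_le _ fun p hp => ?_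
  obtain ⟨P⟩ : Nonempty (Sylow p N) := inferInstance
  have := Sylow.characteristic_of_normal P inferInstance
  refine ⟨P, Subgroup.map_le_iff_le_comap.mp (le_sSup ⟨inferInstance, p, hp.out, ?_⟩)⟩
  exact P.isPGroup'.map N.subtype

theorem fitting_le_sSup_normalPSubgroups : fitting G ≤ sSup (normalPSubgroups G) :=
  iSup₂_le fun _ ⟨hN, hNil⟩ => haveI := hN; le_sSup_normalPSubgroups hNil

end NormalPSubgroups

namespace IsAGroup

variable {G : Type*} [Group G]

theorem commute_of_isPGroup (hA : IsAGroup G) {p : ℕ} (hp : p.Prime) {K : Subgroup G}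
    (hK : IsPGroup p K) {a b : G} (ha : a ∈ K) (hb : b ∈ K) : Commute a b := by
  have : Fact p.Prime := ⟨hp⟩
  obtain ⟨P, hKP⟩ := hK.exists_le_sylow
  exact congrArg Subtype.val (hA p hp P ⟨a, hKP ha⟩ ⟨b, hKP hb⟩)

theorem to_subgroup (hA : IsAGroup G) (H : Subgroup G) : IsAGroup H := fun _ hp Q a b =>
  Subtype.ext <| Subtype.ext <| Commute.eq <|
    hA.commute_of_isPGroup hp (Q.isPGroup'.map H.subtype)
      (Subgroup.mem_map_of_mem H.subtype a.2) (Subgroup.mem_map_of_mem H.subtype b.2)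

theorem le_centralizer_of_mem_normalPSubgroups (hA : IsAGroup G) {P Q : Subgroup G}
    (hP : P ∈ normalPSubgroups G) (hQ : Q ∈ normalPSubgroups G) :
    P ≤ Subgroup.centralizer Q := by
  obtain ⟨hPn, p, hp, hPp⟩ := hP
  obtain ⟨hQn, q, hq, hQq⟩ := hQ
  intro x hx y hy
  obtain rfl | hpq := eq_or_ne p q
  · exact hA.commute_of_isPGroup hp (hQq.to_sup_of_normal_right hPp) (Subgroup.mem_sup_left hy)
      (Subgroup.mem_sup_right hx)
  · have := Fact.mk hp
    have := Fact.mk hq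
    exact Subgroup.commute_of_normal_of_disjoint Q P hQn hPn
      (IsPGroup.disjoint_of_ne q p hpq.symm Q P hQq hPp) y x hy hx

theorem isMulCommutative_fitting [Finite G] (hA : IsAGroup G) : IsMulCommutative (fitting G) :=
  Subgroup.le_centralizer_iff_isMulCommutative.mp <| fitting_le_sSup_normalPSubgroups.trans <|
    (Subgroup.sSup_le_centralizer_sSup fun _ hP _ hQ =>
      hA.le_centralizer_of_mem_normalPSubgroups hP hQ).trans
      (Subgroup.centralizer_le fitting_le_sSup_normalPSubgroups)

/-- Taunt's lemma. -/
theorem disjoint_center_commutator [Finite G] (hA : IsAGroup G) :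
    Disjoint (Subgroup.center G) (commutator G) := by
  refine Subgroup.disjoint_def.mpr fun {x} hxZ hxC => orderOf_eq_one_iff.mp ?_
  refine Nat.eq_one_iff_not_exists_prime_dvd.mpr fun p hp hdvd => ?_
  have : Fact p.Prime := ⟨hp⟩
  obtain ⟨P⟩ : Nonempty (Sylow p G) := inferInstance
  have : IsMulCommutative P := ⟨⟨hA p hp P⟩⟩
  -- the transfer to the abelian group `P` kills `G'` and raises central elements to the index
  have htransfer := MonoidHom.transfer_eq_pow (MonoidHom.id P) x fun k g _ => by
    rw [Subgroup.mem_center_iff.mp (Subgroup.pow_mem _ hxZ k) g⁻¹, inv_mul_cancel_right]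
  have hker : commutator G ≤ (MonoidHom.transfer (MonoidHom.id P)).ker := by
    rw [commutator_def, Subgroup.commutator_le]
    intro a _ b _
    rw [MonoidHom.mem_ker, map_commutatorElement, commutatorElement_eq_one_iff_commute]
    exact Commute.all _ _
  rw [hker hxC, eq_comm, Subtype.ext_iff] at htransfer
  exact P.not_dvd_index (hdvd.trans (orderOf_dvd_of_pow_eq_one htransfer))

theorem commutatorElement_eq_one [Finite G] (hA : IsAGroup G) {a b : G}
    (ha : Commute ⁅a, b⁆ a) (hb : Commute ⁅a, b⁆ b) : ⁅a, b⁆ = 1 := by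
  set H := Subgroup.closure {a, b}
  have haH : a ∈ H := Subgroup.subset_closure (by simp)
  have hbH : b ∈ H := Subgroup.subset_closure (by simp)
  have hcent : H ≤ Subgroup.centralizer {⁅a, b⁆} := by
    rw [Subgroup.closure_le]
    rintro _ (rfl | rfl)
    exacts [Subgroup.mem_centralizer_singleton_iff.mpr ha.eq.symm,
      Subgroup.mem_centralizer_singleton_iff.mpr hb.eq.symm]
  have hZ : ⁅(⟨a, haH⟩ : H), ⟨b, hbH⟩⁆ ∈ Subgroup.center H :=
    Subgroup.mem_center_iff.mpr fun c =>
      Subtype.ext (Subgroup.mem_centralizer_singleton_iff.mp (hcent c.2))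
  have hC := Subgroup.commutator_mem_commutator (Subgroup.mem_top (⟨a, haH⟩ : H))
    (Subgroup.mem_top (⟨b, hbH⟩ : H))
  exact congrArg Subtype.val
    (Subgroup.disjoint_def.mp (hA.to_subgroup H).disjoint_center_commutator hZ hC)

end IsAGroup

section CommutatorHom

variable {G : Type*} [Group G] (A : Subgroup G) [A.Normal] [IsMulCommutative A]

def commutatorHom (t : G) : A →* A :=
  (MulAut.conjNormal t).toMonoidHom / MonoidHom.id A

theorem coe_commutatorHom_apply (t : G) (a : A) : (commutatorHom A t a : G) = ⁅t, (a : G)⁆ := by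
  simp [commutatorHom, commutatorElement_def, div_eq_mul_inv]

variable {A} in
theorem mem_ker_commutatorHom {t : G} {a : A} : a ∈ (commutatorHom A t).ker ↔ Commute t a := by
  rw [MonoidHom.mem_ker, ← Subtype.coe_inj, coe_commutatorHom_apply, OneMemClass.coe_one,
    commutatorElement_eq_one_iff_commute]

theorem IsAGroup.disjoint_ker_range_commutatorHom [Finite G] (hA : IsAGroup G) (t : G) :
    Disjoint (commutatorHom A t).ker (commutatorHom A t).range := by
  refine Subgroup.disjoint_def.mpr ?_
  rintro _ hker ⟨f, rfl⟩
  rw [mem_ker_commutatorHom, coe_commutatorHom_apply] at hker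
  rw [← Subtype.coe_inj, coe_commutatorHom_apply, OneMemClass.coe_one]
  refine hA.commutatorElement_eq_one hker.symm ?_
  rw [← coe_commutatorHom_apply]
  exact setLike_mul_comm (Subtype.prop _) f.2

end CommutatorHom

open scoped Pointwise in
theorem stmt_13_general (G : Type*) [Group G] [Finite G] (hA : IsAGroup G)
    (T : Subgroup G)
    (hgen : (fitting G : Set G) * (T : Set G) = Set.univ)
    (g : G) :
    ∃ k x y : G, x ∈ fitting G ∧ y ∈ T ∧ k⁻¹ * g * k = x * y ∧ x * y = y * x := by
  have := hA.isMulCommutative_fitting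
  obtain ⟨a, ha, t, ht, rfl⟩ : g ∈ (fitting G : Set G) * T := hgen ▸ Set.mem_univ g
  obtain ⟨⟨k, hkF⟩, hk, ⟨f, hfF⟩, hkf⟩ := (commutatorHom (fitting G) t).exists_mem_ker_mul_eq
    (hA.disjoint_ker_range_commutatorHom (fitting G) t) ⟨a, ha⟩
  have ha : a = k * ⁅t, f⁆ := by
    rw [← coe_commutatorHom_apply _ _ ⟨f, hfF⟩]
    exact congrArg Subtype.val hkf
  have hfk : Commute f k := setLike_mul_comm hfF hkF
  have hf : Commute f (t * f * t⁻¹) := setLike_mul_comm hfF ((fitting_normal G).conj_mem f hfF t)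
  refine ⟨f⁻¹, k, t, hkF, ht, ?_, (mem_ker_commutatorHom.mp hk).eq.symm⟩
  rw [inv_inv, ha, commutatorElement_def]
  calc f * (k * (t * f * t⁻¹ * f⁻¹) * t) * f⁻¹
      = f * k * (t * f * t⁻¹) * (f⁻¹ * t * f⁻¹) := by group
    _ = k * (f * (t * f * t⁻¹)) * (f⁻¹ * t * f⁻¹) := by rw [hfk.eq]; group
    _ = k * t := by rw [hf.eq]; group

open scoped Pointwise in
/-- Let `G` be a finite `A`-group with `G = F ⋊ T` an internal semidirect
product, `F = F(G)` the Fitting subgroup. Then every `g ∈ G` has a conjugate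
`k⁻¹gk = xy` with `x ∈ F`, `y ∈ T` and `xy = yx`. -/
theorem stmt_13 (G : Type*) [Group G] [Finite G] (hA : IsAGroup G)
    (T : Subgroup G) (hdisj : fitting G ⊓ T = ⊥)
    (hgen : (fitting G : Set G) * (T : Set G) = Set.univ)
    (g : G) :
    ∃ k x y : G, x ∈ fitting G ∧ y ∈ T ∧ k⁻¹ * g * k = x * y ∧ x * y = y * x :=
  stmt_13_general G hA T hgen g
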